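/- Define y : ℝ² → ℂ³ by y(v,w) = ( (1/√5)·e^{−i(4√3/√10)v}, (1/√5)·e^{i((√3/√10)v − (3√2/2)w)}, (√3/√5)·e^{i((√3/√10)v + (√2/2)w)} ). Then for every (v,w): ‖y(v,w)‖ = 1, ⟨∂y/∂v, i·y⟩_ℝ = 0, and ⟨∂y/∂w, i·y⟩_ℝ = 0. Hence y is a Legendrian surface in the unit sphere S⁵ ⊂ ℂ³. -/

import Mathlib

/-!
Each coordinate of `y` has the form `c k * exp (i (α k * v + β k * w))`, so along a coordinate
line `y` moves on a torus, with velocity `i a k * y k` in the `k`-th coordinate (`a = α` or `β`).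
Hence `‖y‖² = ∑ c k ²` and `⟨∂y, i y⟩_ℝ = ∑ a k * c k ²`. With weights `c k ² = (1, 1, 3) / 5`
both Legendre conditions become the linear relations `-4 + 1 + 3 = 0` and `-3 + 3 = 0`.
-/

open scoped ComplexInnerProductSpace
open Complex ComplexConjugate

theorem Complex.re_inner_ofReal_mul_I_mul (a : ℝ) (z : ℂ) :
    (⟪(a : ℂ) * I * z, I * z⟫).re = a * ‖z‖ ^ 2 := by
  have h : I * z * ((a : ℂ) * -I * conj z) = ((a * ‖z‖ ^ 2 : ℝ) : ℂ) := by
    push_cast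
    rw [← mul_conj']
    linear_combination (-a * z * conj z) * I_mul_I
  rw [RCLike.inner_apply, map_mul, map_mul, conj_ofReal, conj_I, h, ofReal_re]

namespace EuclideanSpace

variable {ι : Type*}

noncomputable def phaseCurve (c a d : ι → ℝ) (t : ℝ) : EuclideanSpace ℂ ι :=
  WithLp.toLp 2 fun k => (c k : ℂ) * exp (I * ((a k * t + d k : ℝ) : ℂ))

theorem norm_phaseCurve_apply (c a d : ι → ℝ) (t : ℝ) (k : ι) :
    ‖phaseCurve c a d t k‖ = |c k| := by
  simp only [phaseCurve, PiLp.toLp_apply, norm_mul, norm_real, Real.norm_eq_abs,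
    norm_exp_I_mul_ofReal, mul_one]

variable [Fintype ι]

theorem norm_phaseCurve (c a d : ι → ℝ) (t : ℝ) :
    ‖phaseCurve c a d t‖ = √(∑ k, c k ^ 2) := by
  simp only [EuclideanSpace.norm_eq, norm_phaseCurve_apply, sq_abs]

theorem hasDerivAt_phaseCurve (c a d : ι → ℝ) (t : ℝ) :
    HasDerivAt (phaseCurve c a d)
      (WithLp.toLp 2 fun k => (a k : ℂ) * I * phaseCurve c a d t k) t := by
  have hcoord : ∀ k, HasDerivAt (fun s : ℝ => (c k : ℂ) * exp (I * ((a k * s + d k : ℝ) : ℂ)))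
      ((a k : ℂ) * I * phaseCurve c a d t k) t := fun k => by
    have hphase : HasDerivAt (fun s : ℝ => I * ((a k * s + d k : ℝ) : ℂ)) (I * a k) t := by
      simpa using (((hasDerivAt_id t).const_mul (a k)).add_const (d k)).ofReal_comp.const_mul I
    refine (hphase.cexp.const_mul (c k : ℂ)).congr_deriv ?_
    simp only [phaseCurve, PiLp.toLp_apply]
    ring
  exact (PiLp.hasFDerivAt_toLp (𝕜 := ℝ) 2 _).comp_hasDerivAt t (hasDerivAt_pi.2 hcoord)

theorem re_inner_deriv_phaseCurve (c a d : ι → ℝ) (t : ℝ) :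
    (⟪deriv (phaseCurve c a d) t, I • phaseCurve c a d t⟫).re = ∑ k, a k * c k ^ 2 := by
  rw [(hasDerivAt_phaseCurve c a d t).deriv, PiLp.inner_apply, re_sum]
  refine Finset.sum_congr rfl fun k _ => ?_
  rw [PiLp.toLp_apply, PiLp.smul_apply, smul_eq_mul, Complex.re_inner_ofReal_mul_I_mul,
    norm_phaseCurve_apply, sq_abs]

end EuclideanSpace

open EuclideanSpace in
/-- the explicit surface y(v,w) is a Legendrian surface in S⁵ ⊂ ℂ³. -/
theorem stmt_11 (y : ℝ → ℝ → EuclideanSpace ℂ (Fin 3))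
    (hy : ∀ v w : ℝ, y v w = (WithLp.equiv 2 (Fin 3 → ℂ)).symm
      ![((1/Real.sqrt 5 : ℝ) : ℂ)
          * Complex.exp (-Complex.I * ((4*Real.sqrt 3/Real.sqrt 10*v : ℝ) : ℂ)),
        ((1/Real.sqrt 5 : ℝ) : ℂ)
          * Complex.exp (Complex.I * ((Real.sqrt 3/Real.sqrt 10*v - 3*Real.sqrt 2/2*w : ℝ) : ℂ)),
        ((Real.sqrt 3/Real.sqrt 5 : ℝ) : ℂ)
          * Complex.exp (Complex.I * ((Real.sqrt 3/Real.sqrt 10*v + Real.sqrt 2/2*w : ℝ) : ℂ))]) :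
    ∀ v w : ℝ, ‖y v w‖ = 1 ∧
      (⟪deriv (fun t => y t w) v, Complex.I • y v w⟫).re = 0 ∧
      (⟪deriv (fun t => y v t) w, Complex.I • y v w⟫).re = 0 := by
  intro v w
  set c : Fin 3 → ℝ := ![1 / √5, 1 / √5, √3 / √5]
  have hv : (fun t => y t w) = phaseCurve c ![-(4 * √3 / √10), √3 / √10, √3 / √10]
      ![0, -(3 * √2 / 2 * w), √2 / 2 * w] := by
    funext t
    rw [hy]
    ext k
    fin_cases k <;> simp [phaseCurve, c]
    all_goals ring_nf
  have hw : (fun t => y v t) = phaseCurve c ![0, -(3 * √2 / 2), √2 / 2]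
      ![-(4 * √3 / √10 * v), √3 / √10 * v, √3 / √10 * v] := by
    funext t
    rw [hy]
    ext k
    fin_cases k <;> simp [phaseCurve, c]
    all_goals ring_nf
  have hsq : c 0 ^ 2 = 1 / 5 ∧ c 1 ^ 2 = 1 / 5 ∧ c 2 ^ 2 = 3 / 5 := by
    simp [c, div_pow]
  refine ⟨?_, ?_, ?_⟩
  · rw [show y v w = phaseCurve c _ _ w from congrFun hw w, norm_phaseCurve, Fin.sum_univ_three,
      hsq.1, hsq.2.1, hsq.2.2]
    norm_num
  · rw [show y v w = phaseCurve c _ _ v from congrFun hv v, hv, re_inner_deriv_phaseCurve,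
      Fin.sum_univ_three, hsq.1, hsq.2.1, hsq.2.2]
    simp only [Fin.isValue, Matrix.cons_val]
    ring
  · rw [show y v w = phaseCurve c _ _ w from congrFun hw w, hw, re_inner_deriv_phaseCurve,
      Fin.sum_univ_three, hsq.1, hsq.2.1, hsq.2.2]
    simp only [Fin.isValue, Matrix.cons_val]
    ring
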